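/- arXiv:1406.5671 — 2 statements merged into one kernel-verified Lean document; each statement's English description precedes it below -/
import Mathlib

section
/- For every τ ∈ P_n and every i ∈ ℤ/2nℤ: (1) if i ∈ A(τ) then s_i·τ covers τ in the uncrossing partial order and c(s_i·τ) = c(τ) + 1; (2) if i ∈ B(τ) then τ covers s_i·τ and c(s_i·τ) = c(τ) − 1; (3) if i ∈ C(τ) then s_i·τ = τ. -/
open scoped Classical

/-- `x` lies strictly inside the arc going (cyclically) from `a` to `b`. -/
def InArc (m : ℕ) (a b x : ZMod m) : Prop :=
  0 < (x - a).val ∧ (x - a).val < (b - a).val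

/-- The chords `{a,b}` and `{c,d}` on the circle `ℤ/mℤ` cross: all four endpoints are
distinct and the endpoints alternate in cyclic order. -/
def Crosses (m : ℕ) (a b c d : ZMod m) : Prop :=
  a ≠ b ∧ c ≠ d ∧ c ≠ a ∧ c ≠ b ∧ d ≠ a ∧ d ≠ b ∧
    (InArc m a b c ↔ InArc m b a d)

/-- A matching of the `2n` points `ℤ/2nℤ`: a fixed-point-free involution. -/
def IsMatching (n : ℕ) (τ : ZMod (2 * n) → ZMod (2 * n)) : Prop :=
  (∀ i, τ (τ i) = i) ∧ ∀ i, τ i ≠ i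

/-- The number of crossings `c(τ)`: each unordered crossing pair of chords of `τ`
is counted `8` times by ordered pairs of representatives. -/
noncomputable def crossNum (n : ℕ) (τ : ZMod (2 * n) → ZMod (2 * n)) : ℕ :=
  {p : ZMod (2 * n) × ZMod (2 * n) |
    Crosses (2 * n) p.1 (τ p.1) p.2 (τ p.2)}.ncard / 8

/-- Replace the pairs `{a, τ a}` and `{b, τ b}` of `τ` by `{a, b}` and `{τ a, τ b}`. -/
def swapPair (n : ℕ) (τ : ZMod (2 * n) → ZMod (2 * n)) (a b : ZMod (2 * n)) :
    ZMod (2 * n) → ZMod (2 * n) :=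
  fun x => if x = a then b else if x = b then a
    else if x = τ a then τ b else if x = τ b then τ a else τ x

/-- `τ'` is obtained from `τ` by a single uncrossing move: two crossing pairs
`{a, τ a}`, `{b, τ b}` are replaced by `{a,b}, {τ a, τ b}` or by `{a, τ b}, {τ a, b}`. -/
def UncrossingMove (n : ℕ) (τ τ' : ZMod (2 * n) → ZMod (2 * n)) : Prop :=
  ∃ a b, Crosses (2 * n) a (τ a) b (τ b) ∧
    (τ' = swapPair n τ a b ∨ τ' = swapPair n τ a (τ b))

/-- The uncrossing partial order on matchings: the reflexive-transitive closure of the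
relation `τ' < τ` whenever `τ'` is obtained from `τ` by an uncrossing move and
`c(τ') = c(τ) - 1`. -/
def UncrossLE (n : ℕ) (τ σ : ZMod (2 * n) → ZMod (2 * n)) : Prop :=
  Relation.ReflTransGen (fun x y => IsMatching n x ∧ IsMatching n y ∧
    UncrossingMove n y x ∧ crossNum n y = crossNum n x + 1) τ σ

/-- `s_i · τ := s_i ∘ τ ∘ s_i` where `s_i` is the transposition of `i` and `i+1`. -/
def sMove (n : ℕ) (i : ZMod (2 * n)) (τ : ZMod (2 * n) → ZMod (2 * n)) :
    ZMod (2 * n) → ZMod (2 * n) :=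
  fun x => Equiv.swap i (i + 1) (τ (Equiv.swap i (i + 1) x))

/-- `i ∈ A(τ)`: `τ i ≠ i+1` and the chords `{i, τ i}` and `{i+1, τ (i+1)}` do not cross. -/
def inA (n : ℕ) (τ : ZMod (2 * n) → ZMod (2 * n)) (i : ZMod (2 * n)) : Prop :=
  τ i ≠ i + 1 ∧ ¬ Crosses (2 * n) i (τ i) (i + 1) (τ (i + 1))

/-- `i ∈ B(τ)`: `τ i ≠ i+1` and the chords `{i, τ i}` and `{i+1, τ (i+1)}` cross. -/
def inB (n : ℕ) (τ : ZMod (2 * n) → ZMod (2 * n)) (i : ZMod (2 * n)) : Prop :=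
  τ i ≠ i + 1 ∧ Crosses (2 * n) i (τ i) (i + 1) (τ (i + 1))

/-- `i ∈ C(τ)`: `i` is matched with `i+1`. -/
def inC (n : ℕ) (τ : ZMod (2 * n) → ZMod (2 * n)) (i : ZMod (2 * n)) : Prop :=
  τ i = i + 1

/-- Elements of `P̂_n`, modelled inside `Option`: `none` is the adjoined bottom `0̂`,
and `some τ` belongs to `P̂_n` when `τ` is a matching. -/
def inPhat (n : ℕ) (x : Option (ZMod (2 * n) → ZMod (2 * n))) : Prop :=
  ∀ τ ∈ x, IsMatching n τ

/-- The order on `P̂_n`: `0̂` is below everything, and matchings are compared by the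
uncrossing order. -/
def hatLE (n : ℕ) (x y : Option (ZMod (2 * n) → ZMod (2 * n))) : Prop :=
  x = none ∨ ∃ τ σ, x = some τ ∧ y = some σ ∧ UncrossLE n τ σ

/-- The rank function of `P̂_n`: `c(0̂) = -1` and `c(some τ) = crossNum τ`. -/
noncomputable def hatRank (n : ℕ) (x : Option (ZMod (2 * n) → ZMod (2 * n))) : ℤ :=
  x.elim (-1) fun τ => (crossNum n τ : ℤ)

/-!
Conjugating `τ` by `s_i = (i i+1)` only moves endpoints between the adjacent points `i` and
`i + 1`. Since no point lies strictly between them, this preserves the crossing or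
non-crossing of any two chords, except for the chords `{i, u}` and `{i + 1, v}` through `i`
and `i + 1` themselves, which become `{i + 1, u}` and `{i, v}`; of these two ways of joining
`i, i + 1` to `u, v`, exactly one crosses. So for `i ∈ A(τ)` the matching `s_i·τ` has exactly
one crossing more than `τ`, and uncrossing it at `i` gives back `τ`. As the crossing number
strictly increases along the uncrossing order, a move changing it by one is a cover. Case `B`
is case `A` for `s_i·τ`, and in case `C` the matching `τ` commutes with `s_i`.
-/

section Arc

variable {m : ℕ} [NeZero m] {a b c d x : ZMod m}

lemma ZMod.val_sub_add_val (x y : ZMod m) :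
    (x - y).val + y.val = x.val ∨ (x - y).val + y.val = x.val + m := by
  rcases lt_or_ge ((x - y).val + y.val) m with h | h
  · left; rw [← ZMod.val_add_of_lt h, sub_add_cancel]
  · right; rw [ZMod.val_add_val_of_le h, sub_add_cancel]

lemma inArc_iff_val (hab : a ≠ b) (hxa : x ≠ a) (hxb : x ≠ b) :
    InArc m a b x ↔ (a.val < b.val ↔ (a.val < x.val ↔ x.val < b.val)) := by
  unfold InArc
  have := ZMod.val_sub_add_val x a
  have := ZMod.val_sub_add_val b a
  have := ZMod.val_lt a
  have := ZMod.val_lt b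
  have := ZMod.val_lt x
  have := ZMod.val_lt (x - a)
  have := ZMod.val_lt (b - a)
  have := (ZMod.val_injective m).ne hab
  have := (ZMod.val_injective m).ne hxa
  have := (ZMod.val_injective m).ne hxb
  omega

/-- For distinct values, `a.val < c.val ↔ c.val < b.val` says that `c` lies strictly between
`a` and `b`: cutting the circle open at `0`, two chords cross iff exactly one endpoint of the
second lies between the endpoints of the first. -/
lemma crosses_iff_val :
    Crosses m a b c d ↔ a ≠ b ∧ c ≠ d ∧ c ≠ a ∧ c ≠ b ∧ d ≠ a ∧ d ≠ b ∧
      ((a.val < c.val ↔ c.val < b.val) ↔ ¬ (a.val < d.val ↔ d.val < b.val)) := by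
  unfold Crosses
  refine and_congr_right fun hab => ?_
  iterate 3 refine and_congr_right fun _ => ?_
  refine and_congr_right fun hda => and_congr_right fun hdb => ?_
  rw [inArc_iff_val hab (by assumption) (by assumption), inArc_iff_val hab.symm hdb hda]
  have := (ZMod.val_injective m).ne hab
  have := (ZMod.val_injective m).ne hda
  have := (ZMod.val_injective m).ne hdb
  omega

lemma crosses_comm_right : Crosses m a b c d ↔ Crosses m a b d c := by
  simp only [crosses_iff_val]
  constructor <;> rintro ⟨hab, hcd, hca, hcb, hda, hdb, h⟩ <;>
    exact ⟨hab, hcd.symm, hda, hdb, hca, hcb, by tauto⟩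

lemma crosses_comm_left : Crosses m a b c d ↔ Crosses m b a c d := by
  simp only [crosses_iff_val]
  constructor <;> rintro ⟨hab, hcd, hca, hcb, hda, hdb, h⟩ <;>
    refine ⟨hab.symm, hcd, hcb, hca, hdb, hda, ?_⟩ <;>
    have := (ZMod.val_injective m).ne hca <;> have := (ZMod.val_injective m).ne hcb <;>
    have := (ZMod.val_injective m).ne hda <;> have := (ZMod.val_injective m).ne hdb <;> omega

lemma Crosses.symm (h : Crosses m a b c d) : Crosses m c d a b := by
  rw [crosses_iff_val] at h ⊢
  obtain ⟨hab, hcd, hca, hcb, hda, hdb, h⟩ := h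
  refine ⟨hcd, hab, hca.symm, hda.symm, hcb.symm, hdb.symm, ?_⟩
  have := (ZMod.val_injective m).ne hab
  have := (ZMod.val_injective m).ne hcd
  have := (ZMod.val_injective m).ne hca
  have := (ZMod.val_injective m).ne hcb
  have := (ZMod.val_injective m).ne hda
  have := (ZMod.val_injective m).ne hdb
  omega

end Arc

section Adjacent

variable {m : ℕ} [Fact (1 < m)] {i u v x y z w : ZMod m}

lemma ZMod.val_add_one_eq_or (i : ZMod m) :
    (i + 1).val = i.val + 1 ∨ (i + 1).val + m = i.val + 1 := by
  have := ZMod.val_sub_add_val (i + 1) i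
  rw [add_sub_cancel_left, ZMod.val_one] at this
  omega

lemma crosses_adjacent_iff_not (hui : u ≠ i) (hui' : u ≠ i + 1) (hvi : v ≠ i)
    (hvi' : v ≠ i + 1) (huv : u ≠ v) :
    Crosses m i u (i + 1) v ↔ ¬ Crosses m i v (i + 1) u := by
  simp only [crosses_iff_val, ne_eq, hui, hvi, hui.symm, hui'.symm, hvi.symm, hvi'.symm, huv,
    huv.symm, succ_ne_self, not_false_eq_true, true_and]
  have := ZMod.val_add_one_eq_or i
  have := ZMod.val_lt i
  have := ZMod.val_lt u
  have := ZMod.val_lt v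
  have := (ZMod.val_injective m).ne hui
  have := (ZMod.val_injective m).ne hui'
  have := (ZMod.val_injective m).ne hvi
  have := (ZMod.val_injective m).ne hvi'
  have := (ZMod.val_injective m).ne huv
  omega

lemma ZMod.val_swap_add_one (hx : x ≠ i + 1) :
    x.val = i.val ∧ (Equiv.swap i (i + 1) x).val = (i + 1).val ∨
      x.val ≠ i.val ∧ (Equiv.swap i (i + 1) x).val = x.val := by
  by_cases hxi : x = i
  · left; simp [hxi]
  · right; simp [Equiv.swap_apply_of_ne_of_ne hxi hx, (ZMod.val_injective m).ne hxi]

/-- As `i` and `i + 1` are adjacent, moving an endpoint from `i` to the free point `i + 1`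
changes no crossing. -/
lemma crosses_swap_iff_of_ne_add_one (hx : x ≠ i + 1) (hy : y ≠ i + 1) (hz : z ≠ i + 1)
    (hw : w ≠ i + 1) :
    Crosses m (Equiv.swap i (i + 1) x) (Equiv.swap i (i + 1) y) (Equiv.swap i (i + 1) z)
      (Equiv.swap i (i + 1) w) ↔ Crosses m x y z w := by
  simp only [crosses_iff_val, ne_eq, (Equiv.injective _).eq_iff]
  refine and_congr_right fun hxy => and_congr_right fun hzw => and_congr_right fun hzx =>
    and_congr_right fun hzy => and_congr_right fun hwx => and_congr_right fun hwy => ?_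
  have := (ZMod.val_injective m).ne hxy
  have := (ZMod.val_injective m).ne hzw
  have := (ZMod.val_injective m).ne hzx
  have := (ZMod.val_injective m).ne hzy
  have := (ZMod.val_injective m).ne hwx
  have := (ZMod.val_injective m).ne hwy
  have := (ZMod.val_injective m).ne hx
  have := (ZMod.val_injective m).ne hy
  have := (ZMod.val_injective m).ne hz
  have := (ZMod.val_injective m).ne hw
  have := ZMod.val_swap_add_one hx
  have := ZMod.val_swap_add_one hy
  have := ZMod.val_swap_add_one hz
  have := ZMod.val_swap_add_one hw
  have := ZMod.val_add_one_eq_or i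
  have := ZMod.val_lt i
  have := ZMod.val_lt x
  have := ZMod.val_lt y
  have := ZMod.val_lt z
  have := ZMod.val_lt w
  omega

lemma crosses_swap_iff
    (h : (x ≠ i + 1 ∧ y ≠ i + 1 ∧ z ≠ i + 1 ∧ w ≠ i + 1) ∨ (x ≠ i ∧ y ≠ i ∧ z ≠ i ∧ w ≠ i)) :
    Crosses m (Equiv.swap i (i + 1) x) (Equiv.swap i (i + 1) y) (Equiv.swap i (i + 1) z)
      (Equiv.swap i (i + 1) w) ↔ Crosses m x y z w := by
  rcases h with ⟨hx, hy, hz, hw⟩ | ⟨hx, hy, hz, hw⟩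
  · exact crosses_swap_iff_of_ne_add_one hx hy hz hw
  · have hs : ∀ {p : ZMod m}, p ≠ i → Equiv.swap i (i + 1) p ≠ i + 1 := fun hp h =>
      hp (by simpa using congrArg (Equiv.swap i (i + 1)) h)
    simpa using (crosses_swap_iff_of_ne_add_one (hs hx) (hs hy) (hs hz) (hs hw)).symm

end Adjacent

section Uncrossing

variable {n : ℕ} {τ σ : ZMod (2 * n) → ZMod (2 * n)} {i x a b : ZMod (2 * n)}

lemma sMove_swap_apply (x : ZMod (2 * n)) :
    sMove n i τ (Equiv.swap i (i + 1) x) = Equiv.swap i (i + 1) (τ x) := by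
  simp [sMove]

lemma sMove_sMove : sMove n i (sMove n i τ) = τ := by
  funext x
  simp [sMove]

lemma swap_eq_or_eq_sMove (hx : x = a ∨ x = τ a) :
    Equiv.swap i (i + 1) x = Equiv.swap i (i + 1) a ∨
      Equiv.swap i (i + 1) x = sMove n i τ (Equiv.swap i (i + 1) a) := by
  rw [sMove_swap_apply]
  exact hx.imp (congrArg _) (congrArg _)

lemma IsMatching.sMove (hτ : IsMatching n τ) : IsMatching n (sMove n i τ) := by
  refine ⟨fun x => by simp [_root_.sMove, hτ.1], fun x h => hτ.2 (Equiv.swap i (i + 1) x) ?_⟩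
  simpa [_root_.sMove] using congrArg (Equiv.swap i (i + 1)) h

lemma UncrossLE.eq_or_crossNum_lt (h : UncrossLE n τ σ) :
    τ = σ ∨ crossNum n τ < crossNum n σ := by
  induction h with
  | refl => exact .inl rfl
  | tail _ hstep ih => rcases ih with rfl | hlt <;> right <;> omega

lemma uncrossLE_covBy_of_move (hτ : IsMatching n τ) (hσ : IsMatching n σ)
    (hmove : UncrossingMove n σ τ) (hcross : crossNum n σ = crossNum n τ + 1) :
    UncrossLE n τ σ ∧ τ ≠ σ ∧ ∀ ρ, UncrossLE n τ ρ → UncrossLE n ρ σ → ρ = τ ∨ ρ = σ := by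
  refine ⟨.single ⟨hτ, hσ, hmove, hcross⟩, fun h => by simp [h] at hcross, fun ρ h₁ h₂ => ?_⟩
  rcases h₁.eq_or_crossNum_lt with h₁ | h₁
  · exact .inl h₁.symm
  · rcases h₂.eq_or_crossNum_lt with h₂ | h₂
    · exact .inr h₂
    · omega

lemma sMove_eq_self_of_inC (hτ : IsMatching n τ) (hC : inC n τ i) : sMove n i τ = τ := by
  obtain ⟨hinv, -⟩ := hτ
  funext x
  simp only [sMove, Equiv.swap_apply_def]
  unfold inC at hC
  grind

lemma sMove_apply_self (hτ : IsMatching n τ) (hi : τ i ≠ i + 1) :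
    sMove n i τ i = τ (i + 1) := by
  obtain ⟨hinv, hfix⟩ := hτ
  simp only [sMove, Equiv.swap_apply_def]
  grind

variable [Fact (1 < 2 * n)]

lemma IsMatching.crosses_iff_of_mem (hτ : IsMatching n τ) {y : ZMod (2 * n)}
    (hx : x = a ∨ x = τ a) (hy : y = b ∨ y = τ b) :
    Crosses (2 * n) x (τ x) y (τ y) ↔ Crosses (2 * n) a (τ a) b (τ b) := by
  rcases hx with rfl | rfl <;> rcases hy with rfl | rfl <;> simp only [hτ.1]
  · exact crosses_comm_right
  · exact crosses_comm_left
  · exact crosses_comm_left.trans crosses_comm_right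

lemma IsMatching.not_crosses_iff (hτ : IsMatching n τ) (hi : τ i ≠ i + 1) :
    ¬ Crosses (2 * n) i (τ i) (i + 1) (τ (i + 1)) ↔
      Crosses (2 * n) i (τ (i + 1)) (i + 1) (τ i) := by
  obtain ⟨hinv, hfix⟩ := hτ
  have := succ_ne_self i
  refine (crosses_adjacent_iff_not ?_ (hfix _) (hfix i) hi ?_).symm <;> grind

lemma sMove_apply_add_one (hτ : IsMatching n τ) (hi : τ i ≠ i + 1) :
    sMove n i τ (i + 1) = τ i := by
  obtain ⟨hinv, hfix⟩ := hτ
  have := succ_ne_self i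
  simp only [sMove, Equiv.swap_apply_def]
  grind

lemma inA_sMove_of_inB (hτ : IsMatching n τ) (hB : inB n τ i) : inA n (sMove n i τ) i := by
  obtain ⟨hi, hcross⟩ := hB
  rw [inA, sMove_apply_self hτ hi, sMove_apply_add_one hτ hi]
  exact ⟨hτ.2 (i + 1), fun h => (hτ.not_crosses_iff hi).mpr h hcross⟩

lemma uncrossingMove_sMove (hτ : IsMatching n τ) (hA : inA n τ i) :
    UncrossingMove n (sMove n i τ) τ := by
  obtain ⟨hi, hcross⟩ := hA
  refine ⟨i, τ i, ?_, .inl ?_⟩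
  · rw [sMove_apply_self hτ hi, ← sMove_apply_add_one hτ hi, hτ.sMove.1,
      sMove_apply_add_one hτ hi]
    exact crosses_comm_right.mp ((hτ.not_crosses_iff hi).mp hcross)
  · obtain ⟨hinv, hfix⟩ := hτ
    have := succ_ne_self i
    funext x
    simp only [swapPair, sMove, Equiv.swap_apply_def]
    grind

def crossingPairs (n : ℕ) (τ : ZMod (2 * n) → ZMod (2 * n)) :
    Set (ZMod (2 * n) × ZMod (2 * n)) :=
  {p | Crosses (2 * n) p.1 (τ p.1) p.2 (τ p.2)}

def adjacentChordPairs (n : ℕ) (τ : ZMod (2 * n) → ZMod (2 * n)) (i : ZMod (2 * n)) :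
    Finset (ZMod (2 * n) × ZMod (2 * n)) :=
  {i, τ i} ×ˢ {i + 1, τ (i + 1)} ∪ {i + 1, τ (i + 1)} ×ˢ {i, τ i}

lemma card_adjacentChordPairs (hτ : IsMatching n τ) (hi : τ i ≠ i + 1) :
    (adjacentChordPairs n τ i).card = 8 := by
  have hdisj : Disjoint ({i, τ i} : Finset _) {i + 1, τ (i + 1)} := by
    simp only [Finset.disjoint_insert_left, Finset.disjoint_insert_right, Finset.mem_insert,
      Finset.mem_singleton, Finset.disjoint_singleton]
    grind [IsMatching, succ_ne_self]
  rw [adjacentChordPairs, Finset.card_union_of_disjoint, Finset.card_product,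
    Finset.card_product, Finset.card_pair (hτ.2 i).symm, Finset.card_pair (hτ.2 (i + 1)).symm]
  simp [Finset.disjoint_product, hdisj]

lemma disjoint_crossingPairs_adjacentChordPairs (hτ : IsMatching n τ)
    (hcross : ¬ Crosses (2 * n) i (τ i) (i + 1) (τ (i + 1))) :
    Disjoint (crossingPairs n τ) (adjacentChordPairs n τ i) := by
  rw [Set.disjoint_left]
  rintro ⟨x, y⟩ hxy hmem
  simp only [adjacentChordPairs, Finset.coe_union, Finset.coe_product, Set.mem_union,
    Set.mem_prod, Finset.coe_insert, Finset.coe_singleton, Set.mem_insert_iff,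
    Set.mem_singleton_iff] at hmem
  rcases hmem with ⟨hx, hy⟩ | ⟨hx, hy⟩
  · exact hcross ((hτ.crosses_iff_of_mem hx hy).mp hxy)
  · exact hcross ((hτ.crosses_iff_of_mem hy hx).mp hxy.symm)

lemma preimage_crossingPairs_sMove (hτ : IsMatching n τ) (hA : inA n τ i) :
    Prod.map (Equiv.swap i (i + 1)) (Equiv.swap i (i + 1)) ⁻¹' crossingPairs n (sMove n i τ) =
      crossingPairs n τ ∪ adjacentChordPairs n τ i := by
  obtain ⟨hi, hcross⟩ := hA
  ext ⟨x, y⟩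
  have hmem : (x, y) ∈ adjacentChordPairs n τ i ↔
      (x = i ∨ x = τ i) ∧ (y = i + 1 ∨ y = τ (i + 1)) ∨
        (x = i + 1 ∨ x = τ (i + 1)) ∧ (y = i ∨ y = τ i) := by
    simp [adjacentChordPairs]
  by_cases hxy : (x, y) ∈ adjacentChordPairs n τ i
  · simp only [Set.mem_union, Finset.mem_coe, hxy, or_true, iff_true, Set.mem_preimage,
      Prod.map_apply, crossingPairs, Set.mem_ofPred_eq]
    have hnew := (hτ.not_crosses_iff hi).mp hcross
    rcases hmem.mp hxy with ⟨hx, hy⟩ | ⟨hx, hy⟩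
    · rw [hτ.sMove.crosses_iff_of_mem (swap_eq_or_eq_sMove hx) (swap_eq_or_eq_sMove hy)]
      simpa [sMove_apply_self hτ hi, sMove_apply_add_one hτ hi] using hnew.symm
    · rw [hτ.sMove.crosses_iff_of_mem (swap_eq_or_eq_sMove hx) (swap_eq_or_eq_sMove hy)]
      simpa [sMove_apply_self hτ hi, sMove_apply_add_one hτ hi] using hnew
  · simp only [Set.mem_union, Finset.mem_coe, hxy, or_false, Set.mem_preimage,
      Prod.map_apply, crossingPairs, Set.mem_ofPred_eq, sMove_swap_apply]
    rw [hmem] at hxy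
    apply crosses_swap_iff
    obtain ⟨hinv, -⟩ := hτ
    have := succ_ne_self i
    grind

lemma crossNum_sMove_of_inA (hτ : IsMatching n τ) (hA : inA n τ i) :
    crossNum n (sMove n i τ) = crossNum n τ + 1 := by
  have hcard : (crossingPairs n (sMove n i τ)).ncard = (crossingPairs n τ).ncard + 8 := by
    have hs := (Equiv.swap i (i + 1)).bijective
    rw [← Set.ncard_preimage_of_injective_subset_range (hs.1.prodMap hs.1)
        (by simp [(hs.2.prodMap hs.2).range_eq]),
      preimage_crossingPairs_sMove hτ hA,
      Set.ncard_union_eq (disjoint_crossingPairs_adjacentChordPairs hτ hA.2),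
      Set.ncard_coe_finset, card_adjacentChordPairs hτ hA.1]
  change (crossingPairs n (sMove n i τ)).ncard / 8 = (crossingPairs n τ).ncard / 8 + 1
  omega

end Uncrossing

/-- For `τ ∈ P_n` and `i ∈ ℤ/2nℤ`: if `i ∈ A(τ)` then `s_i·τ` covers `τ`
and `c(s_i·τ) = c(τ) + 1`; if `i ∈ B(τ)` then `τ` covers `s_i·τ` and
`c(s_i·τ) = c(τ) - 1`; if `i ∈ C(τ)` then `s_i·τ = τ`. -/
theorem sMove_cover (n : ℕ) (hn : 1 ≤ n)
    (τ : ZMod (2 * n) → ZMod (2 * n)) (hτ : IsMatching n τ) (i : ZMod (2 * n)) :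
    (inA n τ i →
      UncrossLE n τ (sMove n i τ) ∧ τ ≠ sMove n i τ ∧
      (∀ σ, IsMatching n σ → UncrossLE n τ σ → UncrossLE n σ (sMove n i τ) →
        σ = τ ∨ σ = sMove n i τ) ∧
      crossNum n (sMove n i τ) = crossNum n τ + 1) ∧
    (inB n τ i →
      UncrossLE n (sMove n i τ) τ ∧ sMove n i τ ≠ τ ∧
      (∀ σ, IsMatching n σ → UncrossLE n (sMove n i τ) σ → UncrossLE n σ τ →
        σ = sMove n i τ ∨ σ = τ) ∧
      crossNum n τ = crossNum n (sMove n i τ) + 1) ∧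
    (inC n τ i → sMove n i τ = τ) := by
  have : Fact (1 < 2 * n) := ⟨by omega⟩
  refine ⟨fun hA => ?_, fun hB => ?_, sMove_eq_self_of_inC hτ⟩
  · have hcross := crossNum_sMove_of_inA hτ hA
    obtain ⟨hle, hne, hcov⟩ :=
      uncrossLE_covBy_of_move hτ hτ.sMove (uncrossingMove_sMove hτ hA) hcross
    exact ⟨hle, hne, fun σ _ => hcov σ, hcross⟩
  · have hA := inA_sMove_of_inB hτ hB
    have hmove := uncrossingMove_sMove hτ.sMove hA
    have hcross := crossNum_sMove_of_inA hτ.sMove hA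
    rw [sMove_sMove] at hmove hcross
    obtain ⟨hle, hne, hcov⟩ := uncrossLE_covBy_of_move hτ.sMove hτ hmove hcross
    exact ⟨hle, hne, fun σ _ => hcov σ, hcross⟩
end

section
/- The uncrossing partial order on P_n has a unique maximal element, namely the matching τ_top given by τ_top(i) = i + n (mod 2n), and c(τ_top) = n(n−1)/2. -/
set_option linter.unusedSectionVars false
set_option maxHeartbeats 1000000


open scoped Classical

section DV
variable {m : ℕ} [NeZero m]

def dv (a x : ZMod m) : ℕ := (x - a).val

lemma dv_lt (a x : ZMod m) : dv a x < m := ZMod.val_lt _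

lemma dv_eq_zero (a x : ZMod m) : dv a x = 0 ↔ x = a := by
  rw [dv, ZMod.val_eq_zero, sub_eq_zero]

lemma dv_pos {a x : ZMod m} (h : x ≠ a) : 0 < dv a x := by
  rcases Nat.eq_zero_or_pos (dv a x) with h0 | h0
  · exact absurd ((dv_eq_zero a x).1 h0) h
  · exact h0

lemma dv_inj {a x y : ZMod m} (h : dv a x = dv a y) : x = y := by
  have := ZMod.val_injective m h
  exact sub_left_injective this

lemma dv_ne {a x y : ZMod m} (h : x ≠ y) : dv a x ≠ dv a y :=
  fun hh => h (dv_inj hh)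

lemma dv_rebase {a b : ZMod m} (hab : b ≠ a) (x : ZMod m) :
    (dv a b ≤ dv a x ∧ dv b x = dv a x - dv a b) ∨
    (dv a x < dv a b ∧ dv b x = dv a x + m - dv a b) := by
  have hb0 : (b - a) ≠ 0 := sub_ne_zero.2 hab
  have key : dv b x = (dv a x + (m - dv a b)) % m := by
    have h1 : x - b = (x - a) + (a - b) := by ring
    have h2 : (a - b) = -(b - a) := by ring
    rw [dv, h1, ZMod.val_add, h2, ZMod.neg_val, if_neg hb0]
    rfl
  have h3 : 0 < dv a b := dv_pos hab
  have h4 : dv a b < m := dv_lt a b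
  have h5 : dv a x < m := dv_lt a x
  rcases le_or_gt (dv a b) (dv a x) with h | h
  · left
    refine ⟨h, ?_⟩
    rw [key]
    have : dv a x + (m - dv a b) = m + (dv a x - dv a b) := by omega
    rw [this, Nat.add_mod_left, Nat.mod_eq_of_lt (by omega)]
  · right
    refine ⟨h, ?_⟩
    rw [key, Nat.mod_eq_of_lt (by omega)]
    omega

lemma dv_succ {a x : ZMod m} (hm : 1 < m) (h : x + 1 ≠ a) :
    dv a (x + 1) = dv a x + 1 := by
  haveI : Fact (1 < m) := ⟨hm⟩
  have h1 : (1 : ZMod m).val = 1 := ZMod.val_one m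
  have hne : dv a x ≠ m - 1 := by
    intro hv
    apply h
    have : x - a = ((m - 1 : ℕ) : ZMod m) := by
      unfold dv at hv
      rw [← ZMod.natCast_zmod_val (x - a), hv]
    have hm1 : ((m - 1 : ℕ) : ZMod m) = -1 := by
      have : ((m : ℕ) : ZMod m) = 0 := ZMod.natCast_self m
      push_cast [Nat.cast_sub (by omega : 1 ≤ m)]
      rw [this]; ring
    rw [hm1] at this
    have : x = a - 1 := by linear_combination this
    rw [this]; ring
  have : x + 1 - a = (x - a) + 1 := by ring
  have hlt : dv a x < m := dv_lt a x
  rw [dv, this, ZMod.val_add, h1, Nat.mod_eq_of_lt]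
  · rfl
  · unfold dv at hlt hne; omega

lemma arc_xor {a b x : ZMod m} (hab : a ≠ b) (hxa : x ≠ a) (hxb : x ≠ b) :
    InArc m b a x ↔ ¬ InArc m a b x := by
  have h1 := dv_rebase (a := a) (b := b) hab.symm x
  have h2 := dv_rebase (a := a) (b := b) hab.symm a
  have h3 : dv a a = 0 := by rw [dv_eq_zero]
  have h4 : dv a b ≠ dv a x := dv_ne (Ne.symm hxb)
  have h5 : 0 < dv a x := dv_pos hxa
  have h6 : 0 < dv a b := dv_pos hab.symm
  have h7 : dv a x < m := dv_lt a x
  have h8 : dv a b < m := dv_lt a b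
  show (0 < dv b x ∧ dv b x < dv b a) ↔ ¬ (0 < dv a x ∧ dv a x < dv a b)
  rw [h3] at h2
  omega

lemma cross_iff {a b c d : ZMod m} (hab : a ≠ b) (hcd : c ≠ d) (hca : c ≠ a)
    (hcb : c ≠ b) (hda : d ≠ a) (hdb : d ≠ b) :
    Crosses m a b c d ↔ ((dv a c < dv a b) ↔ ¬ (dv a d < dv a b)) := by
  rw [Crosses]
  simp only [hab, hcd, hca, hcb, hda, hdb, ne_eq, not_false_iff, true_and]
  rw [arc_xor hab hda hdb]
  have h5 : 0 < dv a c := dv_pos hca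
  have h6 : 0 < dv a d := dv_pos hda
  show ((0 < dv a c ∧ dv a c < dv a b) ↔ ¬(0 < dv a d ∧ dv a d < dv a b)) ↔ _
  constructor <;> intro h <;> omega

lemma crosses_distinct {a b c d : ZMod m} (h : Crosses m a b c d) :
    a ≠ b ∧ c ≠ d ∧ c ≠ a ∧ c ≠ b ∧ d ≠ a ∧ d ≠ b :=
  ⟨h.1, h.2.1, h.2.2.1, h.2.2.2.1, h.2.2.2.2.1, h.2.2.2.2.2.1⟩

lemma crosses_swap_left {a b c d : ZMod m} (h : Crosses m a b c d) :
    Crosses m b a c d := by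
  obtain ⟨hab, hcd, hca, hcb, hda, hdb⟩ := crosses_distinct h
  rw [cross_iff hab hcd hca hcb hda hdb] at h
  rw [cross_iff hab.symm hcd hcb hca hdb hda]
  have r1 := dv_rebase (a := a) hab.symm c
  have r2 := dv_rebase (a := a) hab.symm d
  have r3 := dv_rebase (a := a) hab.symm a
  have h3 : dv a a = 0 := by rw [dv_eq_zero]
  have := dv_ne (a := a) hca; have := dv_ne (a := a) hcb
  have := dv_ne (a := a) hda; have := dv_ne (a := a) hdb
  have := dv_ne (a := a) hcd
  have := dv_pos hca; have := dv_pos hcb.symm -- junk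
  have := dv_pos hab.symm
  have := dv_pos hda
  have := dv_lt a b; have := dv_lt a c; have := dv_lt a d
  rw [h3] at r3
  omega

lemma crosses_swap_right {a b c d : ZMod m} (h : Crosses m a b c d) :
    Crosses m a b d c := by
  obtain ⟨hab, hcd, hca, hcb, hda, hdb⟩ := crosses_distinct h
  rw [cross_iff hab hcd hca hcb hda hdb] at h
  rw [cross_iff hab hcd.symm hda hdb hca hcb]
  tauto

lemma crosses_swap_chords {a b c d : ZMod m} (h : Crosses m a b c d) :
    Crosses m c d a b := by
  obtain ⟨hab, hcd, hca, hcb, hda, hdb⟩ := crosses_distinct h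
  rw [cross_iff hab hcd hca hcb hda hdb] at h
  rw [cross_iff hcd hab hca.symm hda.symm hcb.symm hdb.symm]
  have r1 := dv_rebase (a := a) hca a
  have r2 := dv_rebase (a := a) hca d
  have r3 := dv_rebase (a := a) hca b
  have h3 : dv a a = 0 := by rw [dv_eq_zero]
  have := dv_ne (a := a) hca; have := dv_ne (a := a) hcb
  have := dv_ne (a := a) hda; have := dv_ne (a := a) hdb
  have := dv_ne (a := a) hcd
  have := dv_pos hca
  have := dv_pos hab.symm
  have := dv_pos hda
  have := dv_lt a b; have := dv_lt a c; have := dv_lt a d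
  rw [h3] at r1
  omega

/-- moving the third point one step clockwise to an unoccupied slot
preserves crossing. -/
lemma crosses_move_c {a b c d : ZMod m} (hm : 1 < m) (hab : a ≠ b) (hcd : c ≠ d)
    (hca : c ≠ a) (hcb : c ≠ b) (hda : d ≠ a) (hdb : d ≠ b)
    (h1 : c + 1 ≠ a) (h2 : c + 1 ≠ b) (h3 : c + 1 ≠ d) :
    Crosses m a b c d ↔ Crosses m a b (c + 1) d := by
  rw [cross_iff hab hcd hca hcb hda hdb,
    cross_iff hab h3 h1 h2 hda hdb]
  have hs : dv a (c + 1) = dv a c + 1 := dv_succ hm h1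
  have := dv_ne (a := a) hca; have := dv_ne (a := a) hcb
  have := dv_ne (a := a) h2
  have h0 : dv a a = 0 := by rw [dv_eq_zero]
  omega

lemma zmodOneNeZero (hm : 1 < m) : (1 : ZMod m) ≠ 0 := by
  intro h0
  haveI : Fact (1 < m) := ⟨hm⟩
  have := ZMod.val_one m
  rw [h0] at this
  simp at this

lemma succ_ne_self' (hm : 1 < m) (i : ZMod m) : i + 1 ≠ i := by
  intro h
  exact zmodOneNeZero hm (by linear_combination h)

/-- the flip: swapping two adjacent points lying on different chords flips
the crossing. -/
lemma crosses_flip {i b d : ZMod m} (hm : 1 < m) (hbi : b ≠ i) (hbi1 : b ≠ i + 1)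
    (hdi : d ≠ i) (hdi1 : d ≠ i + 1) (hbd : b ≠ d) :
    Crosses m i b (i + 1) d ↔ ¬ Crosses m (i + 1) b i d := by
  have hii1 : i + 1 ≠ i := succ_ne_self' hm i
  rw [cross_iff hbi.symm hdi1.symm hii1 hbi1.symm hdi hbd.symm,
    cross_iff hbi1.symm hdi.symm hii1.symm hbi.symm hdi1 hbd.symm]
  have h0 : dv i i = 0 := by rw [dv_eq_zero]
  have h1 : dv i (i + 1) = 1 := by rw [dv_succ hm hii1, h0]
  have r1 := dv_rebase (a := i) hii1 b
  have r2 := dv_rebase (a := i) hii1 d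
  have r3 := dv_rebase (a := i) hii1 i
  rw [h0] at r3
  have hb1 : dv i b ≠ 1 := by rw [← h1]; exact dv_ne hbi1
  have hd1 : dv i d ≠ 1 := by rw [← h1]; exact dv_ne hdi1
  have := dv_pos hbi; have := dv_pos hdi
  have := dv_ne (a := i) hbd
  have := dv_lt i b; have := dv_lt i d
  have h1' := dv_ne (a := i) hii1
  rw [h0] at h1'
  rw [h1] at r1 r2 r3 ⊢
  omega

lemma cr_L {a b c d : ZMod m} : Crosses m a b c d ↔ Crosses m b a c d :=
  ⟨crosses_swap_left, crosses_swap_left⟩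
lemma cr_R {a b c d : ZMod m} : Crosses m a b c d ↔ Crosses m a b d c :=
  ⟨crosses_swap_right, crosses_swap_right⟩
lemma cr_C {a b c d : ZMod m} : Crosses m a b c d ↔ Crosses m c d a b :=
  ⟨crosses_swap_chords, crosses_swap_chords⟩

lemma crosses_reorder {a b c d a' b' c' d' : ZMod m}
    (h : (((a' = a ∧ b' = b) ∨ (a' = b ∧ b' = a)) ∧
          ((c' = c ∧ d' = d) ∨ (c' = d ∧ d' = c))) ∨
         (((a' = c ∧ b' = d) ∨ (a' = d ∧ b' = c)) ∧
          ((c' = a ∧ d' = b) ∨ (c' = b ∧ d' = a)))) :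
    Crosses m a b c d ↔ Crosses m a' b' c' d' := by
  rcases h with ⟨h1, h2⟩ | ⟨h1, h2⟩ <;>
    rcases h1 with ⟨rfl, rfl⟩ | ⟨rfl, rfl⟩ <;>
    rcases h2 with ⟨rfl, rfl⟩ | ⟨rfl, rfl⟩
  · rfl
  · exact cr_R
  · exact cr_L
  · exact cr_L.trans cr_R
  · exact cr_C
  · exact cr_C.trans cr_R
  · exact cr_C.trans cr_L
  · exact cr_C.trans (cr_L.trans cr_R)
end DV







section Match
variable {n : ℕ} (hn : 1 ≤ n)

lemma matching_inj {τ : ZMod (2*n) → ZMod (2*n)} (hτ : IsMatching n τ) :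
    Function.Injective τ := by
  intro a b h
  have := congrArg τ h
  rwa [hτ.1, hτ.1] at this

lemma sMove_matching {τ : ZMod (2*n) → ZMod (2*n)} (hτ : IsMatching n τ)
    (i : ZMod (2*n)) : IsMatching n (sMove n i τ) := by
  constructor
  · intro x
    simp only [sMove, Equiv.swap_apply_self, hτ.1]
  · intro x h
    simp only [sMove] at h
    have := congrArg (Equiv.swap i (i+1)) h
    rw [Equiv.swap_apply_self] at this
    exact hτ.2 _ this
end Match

section Big
variable {n : ℕ}

/-- The main pointwise description of crossings of `sMove n i τ` vs `τ`. -/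
lemma sMove_cross_iff (hn : 1 ≤ n) {τ : ZMod (2*n) → ZMod (2*n)}
    (hτ : IsMatching n τ) {i : ZMod (2*n)} (hA : inA n τ i) (p q : ZMod (2*n)) :
    Crosses (2*n) (Equiv.swap i (i+1) p) (Equiv.swap i (i+1) (τ p))
        (Equiv.swap i (i+1) q) (Equiv.swap i (i+1) (τ q)) ↔
      (Crosses (2*n) p (τ p) q (τ q) ∨
        (((p = i ∨ p = τ i) ∧ (q = i + 1 ∨ q = τ (i+1))) ∨
         ((p = i + 1 ∨ p = τ (i+1)) ∧ (q = i ∨ q = τ i)))) := by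
  haveI : NeZero (2*n) := ⟨by omega⟩
  have hm : 1 < 2*n := by omega
  set s : Equiv.Perm (ZMod (2*n)) := Equiv.swap i (i+1) with hs
  set t0 := τ i with ht0
  set t1 := τ (i+1) with ht1
  have hii1 : i + 1 ≠ i := succ_ne_self' hm i
  have ht0i : t0 ≠ i := hτ.2 i
  have ht0i1 : t0 ≠ i + 1 := hA.1
  have ht1i1 : t1 ≠ i + 1 := hτ.2 _
  have hτt0 : τ t0 = i := hτ.1 i
  have hτt1 : τ t1 = i + 1 := hτ.1 _
  have ht1i : t1 ≠ i := by
    intro h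
    apply ht0i1
    rw [ht0, ← hτt1, h]
  have ht01 : t0 ≠ t1 := by
    intro h
    exact hii1 (matching_inj hτ (by rw [← ht0, ← ht1, h])).symm
  have hnA : ¬ Crosses (2*n) i t0 (i+1) t1 := hA.2
  have hB : Crosses (2*n) (i+1) t0 i t1 := by
    have hf := crosses_flip (m := 2*n) hm ht0i ht0i1 ht1i ht1i1 ht01
    tauto
  -- swap values
  have hsi : s i = i + 1 := Equiv.swap_apply_left _ _
  have hsi1 : s (i+1) = i := Equiv.swap_apply_right _ _
  have hsf : ∀ x : ZMod (2*n), x ≠ i → x ≠ i + 1 → s x = x := fun x h1 h2 =>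
    Equiv.swap_apply_of_ne_of_ne h1 h2
  have hst0 : s t0 = t0 := hsf t0 ht0i ht0i1
  have hst1 : s t1 = t1 := hsf t1 ht1i ht1i1
  -- degenerate cases
  by_cases hqp : q = p
  · subst hqp
    refine iff_of_false (fun h => h.2.2.1 rfl) ?_
    rintro (h | ⟨h1 | h1, h2 | h2⟩ | ⟨h1 | h1, h2 | h2⟩)
    · exact h.2.2.1 rfl
    all_goals rw [h1] at h2
    · exact hii1 h2.symm
    · exact ht1i h2.symm
    · exact ht0i1 h2
    · exact ht01 h2
    · exact hii1 h2
    · exact ht0i1 h2.symm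
    · exact ht1i h2
    · exact ht01 h2.symm
  by_cases hqτp : q = τ p
  · subst hqτp
    refine iff_of_false (fun h => h.2.2.2.1 rfl) ?_
    rintro (h | ⟨h1 | h1, h2 | h2⟩ | ⟨h1 | h1, h2 | h2⟩)
    · exact h.2.2.2.1 rfl
    all_goals rw [h1] at h2
    · exact ht0i1 h2
    · exact ht01 h2
    · rw [hτt0] at h2; exact hii1 h2.symm
    · rw [hτt0] at h2; exact ht1i h2.symm
    · exact ht1i h2
    · exact ht01 h2.symm
    · rw [hτt1] at h2; exact hii1 h2
    · rw [hτt1] at h2; exact ht0i1 h2.symm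
  -- now the chords are distinct
  have hpτp : τ p ≠ p := hτ.2 p
  have hqτq : τ q ≠ q := hτ.2 q
  have hτqp : τ q ≠ p := fun h => hqτp (by rw [← h, hτ.1])
  have hτqτp : τ q ≠ τ p := fun h => hqp (matching_inj hτ h)
  have e0 : ∀ x, τ x = i → x = t0 := fun x h => by rw [ht0, ← h, hτ.1]
  have e1 : ∀ x, τ x = i + 1 → x = t1 := fun x h => by rw [ht1, ← h, hτ.1]
  have e2 : ∀ x, τ x = t0 → x = i := fun x h => by
    have := congrArg τ h; rwa [hτ.1, hτt0] at this
  have e3 : ∀ x, τ x = t1 → x = i + 1 := fun x h => by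
    have := congrArg τ h; rwa [hτ.1, hτt1] at this
  by_cases hPi : p = i ∨ p = t0
  · have hQi : ¬ (q = i ∨ q = t0) := by
      rintro (h2 | h2) <;> rcases hPi with h1 | h1
      · exact hqp (h2.trans h1.symm)
      · exact hqτp (by rw [h1, h2, ht0, hτt0])
      · exact hqτp (h2.trans (h1 ▸ ht0))
      · exact hqp (h2.trans h1.symm)
    have hPi1 : ¬ (p = i + 1 ∨ p = t1) := by
      rintro (h2 | h2) <;> rcases hPi with h1 | h1 <;> rw [h1] at h2
      · exact hii1 h2.symm
      · exact ht0i1 h2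
      · exact ht1i h2.symm
      · exact ht01 h2
    have hqi : q ≠ i := fun h => hQi (Or.inl h)
    have hqt0 : q ≠ t0 := fun h => hQi (Or.inr h)
    have hτqi : τ q ≠ i := fun h => hqt0 (e0 q h)
    have hτqt0 : τ q ≠ t0 := fun h => hqi (e2 q h)
    by_cases hQi1 : q = i + 1 ∨ q = t1
    · -- X case: chord of p contains i, chord of q contains i+1
      rcases hPi with rfl | rfl <;> rcases hQi1 with rfl | rfl
      · refine iff_of_true ?_ (Or.inr (Or.inl ⟨Or.inl rfl, Or.inl rfl⟩))
        rw [hsi, ← ht0, hst0, hsi1, ← ht1, hst1]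
        exact hB
      · refine iff_of_true ?_ (Or.inr (Or.inl ⟨Or.inl rfl, Or.inr rfl⟩))
        rw [hsi, ← ht0, hst0, hst1, hτt1, hsi1]
        exact crosses_swap_right hB
      · refine iff_of_true ?_ (Or.inr (Or.inl ⟨Or.inr rfl, Or.inl rfl⟩))
        rw [hτt0, hst0, hsi, hsi1, ← ht1, hst1]
        exact crosses_swap_left hB
      · refine iff_of_true ?_ (Or.inr (Or.inl ⟨Or.inr rfl, Or.inr rfl⟩))
        rw [hτt0, hst0, hsi, hst1, hτt1, hsi1]
        exact crosses_swap_left (crosses_swap_right hB)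
    · -- move case: i in chord of p, i+1 absent
      have hqi1 : q ≠ i + 1 := fun h => hQi1 (Or.inl h)
      have hqt1 : q ≠ t1 := fun h => hQi1 (Or.inr h)
      have hτqi1 : τ q ≠ i + 1 := fun h => hqt1 (e1 q h)
      have key : Crosses (2*n) q (τ q) i t0 ↔ Crosses (2*n) q (τ q) (i+1) t0 :=
        crosses_move_c hm hqτq.symm ht0i.symm hqi.symm hτqi.symm hqt0.symm
          hτqt0.symm hqi1.symm hτqi1.symm ht0i1.symm
      have hXf : ¬ (((p = i ∨ p = t0) ∧ (q = i + 1 ∨ q = t1)) ∨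
          ((p = i + 1 ∨ p = t1) ∧ (q = i ∨ q = t0))) := by
        rintro (⟨h1, h2⟩ | ⟨h1, h2⟩)
        · exact hQi1 h2
        · exact hPi1 h1
      rcases hPi with rfl | rfl
      · rw [hsi, ← ht0, hst0, hsf q hqi hqi1, hsf (τ q) hτqi hτqi1]
        constructor
        · intro h
          exact Or.inl (cr_C.mp (key.mpr (cr_C.mp h)))
        · rintro (h | hX)
          · exact cr_C.mp (key.mp (cr_C.mp h))
          · exact absurd hX hXf
      · rw [hτt0, hst0, hsi, hsf q hqi hqi1, hsf (τ q) hτqi hτqi1]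
        constructor
        · intro h
          exact Or.inl (cr_L.mpr (cr_C.mp (key.mpr (cr_C.mp (cr_L.mp h)))))
        · rintro (h | hX)
          · exact cr_L.mpr (cr_C.mp (key.mp (cr_C.mp (cr_L.mp h))))
          · exact absurd hX hXf
  · have hpi : p ≠ i := fun h => hPi (Or.inl h)
    have hpt0 : p ≠ t0 := fun h => hPi (Or.inr h)
    have hτpi : τ p ≠ i := fun h => hpt0 (e0 p h)
    have hτpt0 : τ p ≠ t0 := fun h => hpi (e2 p h)
    by_cases hQi : q = i ∨ q = t0
    · have hQi1 : ¬ (q = i + 1 ∨ q = t1) := by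
        rintro (h2 | h2) <;> rcases hQi with h1 | h1 <;> rw [h1] at h2
        · exact hii1 h2.symm
        · exact ht0i1 h2
        · exact ht1i h2.symm
        · exact ht01 h2
      by_cases hPi1 : p = i + 1 ∨ p = t1
      · -- X case: chord of p contains i+1, chord of q contains i
        rcases hPi1 with rfl | rfl <;> rcases hQi with rfl | rfl
        · refine iff_of_true ?_ (Or.inr (Or.inr ⟨Or.inl rfl, Or.inl rfl⟩))
          rw [hsi1, ← ht1, hst1, hsi, ← ht0, hst0]
          exact crosses_swap_chords hB
        · refine iff_of_true ?_ (Or.inr (Or.inr ⟨Or.inl rfl, Or.inr rfl⟩))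
          rw [hsi1, ← ht1, hst1, hst0, hτt0, hsi]
          exact crosses_swap_right (crosses_swap_chords hB)
        · refine iff_of_true ?_ (Or.inr (Or.inr ⟨Or.inr rfl, Or.inl rfl⟩))
          rw [hτt1, hst1, hsi1, hsi, ← ht0, hst0]
          exact crosses_swap_left (crosses_swap_chords hB)
        · refine iff_of_true ?_ (Or.inr (Or.inr ⟨Or.inr rfl, Or.inr rfl⟩))
          rw [hτt1, hst1, hsi1, hst0, hτt0, hsi]
          exact crosses_swap_left (crosses_swap_right (crosses_swap_chords hB))
      · -- move case: i in chord of q, i+1 absent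
        have hpi1 : p ≠ i + 1 := fun h => hPi1 (Or.inl h)
        have hpt1 : p ≠ t1 := fun h => hPi1 (Or.inr h)
        have hτpi1 : τ p ≠ i + 1 := fun h => hpt1 (e1 p h)
        have key : Crosses (2*n) p (τ p) i t0 ↔ Crosses (2*n) p (τ p) (i+1) t0 :=
          crosses_move_c hm hpτp.symm ht0i.symm hpi.symm hτpi.symm hpt0.symm
            hτpt0.symm hpi1.symm hτpi1.symm ht0i1.symm
        have hXf : ¬ (((p = i ∨ p = t0) ∧ (q = i + 1 ∨ q = t1)) ∨
            ((p = i + 1 ∨ p = t1) ∧ (q = i ∨ q = t0))) := by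
          rintro (⟨h1, h2⟩ | ⟨h1, h2⟩)
          · exact hPi h1
          · exact hPi1 h1
        rcases hQi with rfl | rfl
        · rw [hsf p hpi hpi1, hsf (τ p) hτpi hτpi1, hsi, ← ht0, hst0]
          constructor
          · intro h
            exact Or.inl (key.mpr h)
          · rintro (h | hX)
            · exact key.mp h
            · exact absurd hX hXf
        · rw [hsf p hpi hpi1, hsf (τ p) hτpi hτpi1, hst0, hτt0, hsi]
          constructor
          · intro h
            exact Or.inl (cr_R.mpr (key.mpr (cr_R.mp h)))
          · rintro (h | hX)
            · exact cr_R.mpr (key.mp (cr_R.mp h))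
            · exact absurd hX hXf
    · -- i absent from both chords
      have hqi : q ≠ i := fun h => hQi (Or.inl h)
      have hqt0 : q ≠ t0 := fun h => hQi (Or.inr h)
      have hτqi : τ q ≠ i := fun h => hqt0 (e0 q h)
      have hτqt0 : τ q ≠ t0 := fun h => hqi (e2 q h)
      by_cases hPi1 : p = i + 1 ∨ p = t1
      · -- i+1 in chord of p
        have hQi1 : ¬ (q = i + 1 ∨ q = t1) := by
          rintro (h2 | h2) <;> rcases hPi1 with h1 | h1
          · exact hqp (h2.trans h1.symm)
          · exact hqτp (by rw [h1, h2, ht1, hτt1])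
          · exact hqτp (h2.trans (h1 ▸ ht1))
          · exact hqp (h2.trans h1.symm)
        have hqi1 : q ≠ i + 1 := fun h => hQi1 (Or.inl h)
        have hqt1 : q ≠ t1 := fun h => hQi1 (Or.inr h)
        have hτqi1 : τ q ≠ i + 1 := fun h => hqt1 (e1 q h)
        have hτqt1 : τ q ≠ t1 := fun h => hqi1 (e3 q h)
        have key : Crosses (2*n) q (τ q) i t1 ↔ Crosses (2*n) q (τ q) (i+1) t1 :=
          crosses_move_c hm hqτq.symm ht1i.symm hqi.symm hτqi.symm hqt1.symm
            hτqt1.symm hqi1.symm hτqi1.symm ht1i1.symm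
        have hXf : ¬ (((p = i ∨ p = t0) ∧ (q = i + 1 ∨ q = t1)) ∨
            ((p = i + 1 ∨ p = t1) ∧ (q = i ∨ q = t0))) := by
          rintro (⟨h1, h2⟩ | ⟨h1, h2⟩)
          · exact hPi h1
          · exact hQi h2
        rcases hPi1 with rfl | rfl
        · rw [hsi1, ← ht1, hst1, hsf q hqi hqi1, hsf (τ q) hτqi hτqi1]
          constructor
          · intro h
            exact Or.inl (cr_C.mp (key.mp (cr_C.mp h)))
          · rintro (h | hX)
            · exact cr_C.mp (key.mpr (cr_C.mp h))
            · exact absurd hX hXf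
        · rw [hτt1, hst1, hsi1, hsf q hqi hqi1, hsf (τ q) hτqi hτqi1]
          constructor
          · intro h
            exact Or.inl (cr_L.mpr (cr_C.mp (key.mp (cr_C.mp (cr_L.mp h)))))
          · rintro (h | hX)
            · exact cr_L.mpr (cr_C.mp (key.mpr (cr_C.mp (cr_L.mp h))))
            · exact absurd hX hXf
      · have hpi1 : p ≠ i + 1 := fun h => hPi1 (Or.inl h)
        have hpt1 : p ≠ t1 := fun h => hPi1 (Or.inr h)
        have hτpi1 : τ p ≠ i + 1 := fun h => hpt1 (e1 p h)
        have hτpt1 : τ p ≠ t1 := fun h => hpi1 (e3 p h)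
        by_cases hQi1 : q = i + 1 ∨ q = t1
        · -- i+1 in chord of q, i absent
          have key : Crosses (2*n) p (τ p) i t1 ↔ Crosses (2*n) p (τ p) (i+1) t1 :=
            crosses_move_c hm hpτp.symm ht1i.symm hpi.symm hτpi.symm hpt1.symm
              hτpt1.symm hpi1.symm hτpi1.symm ht1i1.symm
          have hXf : ¬ (((p = i ∨ p = t0) ∧ (q = i + 1 ∨ q = t1)) ∨
              ((p = i + 1 ∨ p = t1) ∧ (q = i ∨ q = t0))) := by
            rintro (⟨h1, h2⟩ | ⟨h1, h2⟩)
            · exact hPi h1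
            · exact hQi h2
          rcases hQi1 with rfl | rfl
          · rw [hsf p hpi hpi1, hsf (τ p) hτpi hτpi1, hsi1, ← ht1, hst1]
            constructor
            · intro h
              exact Or.inl (key.mp h)
            · rintro (h | hX)
              · exact key.mpr h
              · exact absurd hX hXf
          · rw [hsf p hpi hpi1, hsf (τ p) hτpi hτpi1, hst1, hτt1, hsi1]
            constructor
            · intro h
              exact Or.inl (cr_R.mpr (key.mp (cr_R.mp h)))
            · rintro (h | hX)
              · exact cr_R.mpr (key.mpr (cr_R.mp h))
              · exact absurd hX hXf
        · -- neither i nor i+1 appears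
          have hqi1 : q ≠ i + 1 := fun h => hQi1 (Or.inl h)
          have hqt1 : q ≠ t1 := fun h => hQi1 (Or.inr h)
          have hτqi1 : τ q ≠ i + 1 := fun h => hqt1 (e1 q h)
          have hXf : ¬ (((p = i ∨ p = t0) ∧ (q = i + 1 ∨ q = t1)) ∨
              ((p = i + 1 ∨ p = t1) ∧ (q = i ∨ q = t0))) := by
            rintro (⟨h1, h2⟩ | ⟨h1, h2⟩)
            · exact hPi h1
            · exact hQi h2
          rw [hsf p hpi hpi1, hsf (τ p) hτpi hτpi1, hsf q hqi hqi1,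
            hsf (τ q) hτqi hτqi1]
          exact ⟨Or.inl, fun h => h.elim id (fun hX => absurd hX hXf)⟩
end Big



section Count
variable {n : ℕ}

/-- the pairs of ordered representatives of the chords at `i` and `i+1`. -/
noncomputable def Xf (n : ℕ) (τ : ZMod (2*n) → ZMod (2*n)) (i : ZMod (2*n)) :
    Finset (ZMod (2*n) × ZMod (2*n)) :=
  ({i, τ i} ×ˢ {i + 1, τ (i+1)}) ∪ ({i + 1, τ (i+1)} ×ˢ {i, τ i})

lemma inA_facts (hn : 1 ≤ n) {τ : ZMod (2*n) → ZMod (2*n)}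
    (hτ : IsMatching n τ) {i : ZMod (2*n)} (hA : inA n τ i) :
    i + 1 ≠ i ∧ τ i ≠ i ∧ τ i ≠ i + 1 ∧ τ (i+1) ≠ i + 1 ∧ τ (i+1) ≠ i ∧
      τ i ≠ τ (i+1) := by
  haveI : NeZero (2*n) := ⟨by omega⟩
  have hm : 1 < 2*n := by omega
  have hii1 : i + 1 ≠ i := succ_ne_self' hm i
  have ht1i : τ (i+1) ≠ i := by
    intro h
    exact hA.1 (by rw [← hτ.1 (i+1), h])
  have ht01 : τ i ≠ τ (i+1) := fun h => hii1 (matching_inj hτ h).symm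
  exact ⟨hii1, hτ.2 i, hA.1, hτ.2 _, ht1i, ht01⟩

lemma Xf_card (hn : 1 ≤ n) {τ : ZMod (2*n) → ZMod (2*n)}
    (hτ : IsMatching n τ) {i : ZMod (2*n)} (hA : inA n τ i) :
    (Xf n τ i).card = 8 := by
  classical
  obtain ⟨hii1, ht0i, ht0i1, ht1i1, ht1i, ht01⟩ := inA_facts hn hτ hA
  have hd : Disjoint ({i, τ i} : Finset (ZMod (2*n))) {i + 1, τ (i+1)} := by
    rw [Finset.disjoint_left]
    intro x hx hy
    simp only [Finset.mem_insert, Finset.mem_singleton] at hx hy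
    rcases hx with rfl | rfl <;> rcases hy with h | h
    · exact hii1 h.symm
    · exact ht1i (h.symm)
    · exact ht0i1 h
    · exact ht01 h
  have hdp : Disjoint (({i, τ i} ×ˢ {i + 1, τ (i+1)}) : Finset (ZMod (2*n) × ZMod (2*n)))
      ({i + 1, τ (i+1)} ×ˢ {i, τ i}) := by
    rw [Finset.disjoint_left]
    rintro ⟨x, y⟩ hx hy
    rw [Finset.mem_product] at hx hy
    exact Finset.disjoint_left.1 hd hx.1 hy.1
  have c1 : ({i, τ i} : Finset (ZMod (2*n))).card = 2 := Finset.card_pair ht0i.symm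
  have c2 : ({i + 1, τ (i+1)} : Finset (ZMod (2*n))).card = 2 :=
    Finset.card_pair ht1i1.symm
  rw [Xf]
  rw [Finset.card_union_of_disjoint hdp, Finset.card_product, Finset.card_product,
    c1, c2]

lemma Xf_mem (n : ℕ) (τ : ZMod (2*n) → ZMod (2*n)) (i : ZMod (2*n))
    (p q : ZMod (2*n)) :
    ((p, q) ∈ Xf n τ i) ↔
      (((p = i ∨ p = τ i) ∧ (q = i + 1 ∨ q = τ (i+1))) ∨
       ((p = i + 1 ∨ p = τ (i+1)) ∧ (q = i ∨ q = τ i))) := by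
  classical
  rw [Xf]
  simp [Finset.mem_union, Finset.mem_product]

/-- pairs in `Xf` are non-crossing for `τ` (that is the `inA` hypothesis). -/
lemma Xf_not_cross (hn : 1 ≤ n) {τ : ZMod (2*n) → ZMod (2*n)}
    (hτ : IsMatching n τ) {i : ZMod (2*n)} (hA : inA n τ i)
    {p q : ZMod (2*n)} (hX : (p, q) ∈ Xf n τ i) :
    ¬ Crosses (2*n) p (τ p) q (τ q) := by
  haveI : NeZero (2*n) := ⟨by omega⟩
  have hnA : ¬ Crosses (2*n) i (τ i) (i+1) (τ (i+1)) := hA.2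
  have hτt0 : τ (τ i) = i := hτ.1 i
  have hτt1 : τ (τ (i+1)) = i + 1 := hτ.1 _
  rw [Xf_mem] at hX
  rcases hX with ⟨h1 | h1, h2 | h2⟩ | ⟨h1 | h1, h2 | h2⟩ <;> subst h1 <;> subst h2 <;>
    intro h
  · exact hnA h
  · rw [hτt1] at h
    exact hnA (crosses_swap_right h)
  · rw [hτt0] at h
    exact hnA (crosses_swap_left h)
  · rw [hτt0, hτt1] at h
    exact hnA (crosses_swap_left (crosses_swap_right h))
  · exact hnA (crosses_swap_chords h)
  · rw [hτt0] at h
    exact hnA (crosses_swap_chords (crosses_swap_right h))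
  · rw [hτt1] at h
    exact hnA (crosses_swap_chords (crosses_swap_left h))
  · rw [hτt0, hτt1] at h
    exact hnA (crosses_swap_chords (crosses_swap_left (crosses_swap_right h)))

lemma sMove_ncard (hn : 1 ≤ n) {τ : ZMod (2*n) → ZMod (2*n)}
    (hτ : IsMatching n τ) {i : ZMod (2*n)} (hA : inA n τ i) :
    {p : ZMod (2*n) × ZMod (2*n) |
        Crosses (2*n) p.1 (sMove n i τ p.1) p.2 (sMove n i τ p.2)}.ncard
      = {p : ZMod (2*n) × ZMod (2*n) |
        Crosses (2*n) p.1 (τ p.1) p.2 (τ p.2)}.ncard + 8 := by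
  classical
  haveI : NeZero (2*n) := ⟨by omega⟩
  set s : Equiv.Perm (ZMod (2*n)) := Equiv.swap i (i+1) with hs
  set e : (ZMod (2*n) × ZMod (2*n)) ≃ (ZMod (2*n) × ZMod (2*n)) :=
    Equiv.prodCongr s s with he
  set T : Set (ZMod (2*n) × ZMod (2*n)) :=
    {p | Crosses (2*n) (s p.1) (s (τ p.1)) (s p.2) (s (τ p.2))} with hT
  have h1 : {p : ZMod (2*n) × ZMod (2*n) |
      Crosses (2*n) p.1 (sMove n i τ p.1) p.2 (sMove n i τ p.2)} = e ⁻¹' T := by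
    ext ⟨p, q⟩
    simp only [hT, Set.mem_setOf_eq, Set.mem_preimage, he, Equiv.prodCongr_apply,
      Prod.map, sMove, hs, Equiv.swap_apply_self]
  have h2 : T = {p : ZMod (2*n) × ZMod (2*n) |
      Crosses (2*n) p.1 (τ p.1) p.2 (τ p.2)} ∪ ↑(Xf n τ i) := by
    ext ⟨p, q⟩
    rw [hT]
    simp only [Set.mem_setOf_eq, Set.mem_union, Finset.coe_union, Finset.mem_coe]
    rw [sMove_cross_iff hn hτ hA p q, Xf_mem]
  have h3 : Disjoint {p : ZMod (2*n) × ZMod (2*n) |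
      Crosses (2*n) p.1 (τ p.1) p.2 (τ p.2)} ↑(Xf n τ i) := by
    rw [Set.disjoint_left]
    rintro ⟨p, q⟩ hc hX
    exact Xf_not_cross hn hτ hA (Finset.mem_coe.1 hX) hc
  have h4 : e ⁻¹' T = e.symm '' T := by
    rw [Equiv.image_eq_preimage_symm]
    simp
  rw [h1, h4, Set.ncard_image_of_injective T e.symm.injective, h2,
    Set.ncard_union_eq h3 (Set.toFinite _) (Set.toFinite _),
    Set.ncard_coe_finset, Xf_card hn hτ hA]

lemma sMove_crossNum (hn : 1 ≤ n) {τ : ZMod (2*n) → ZMod (2*n)}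
    (hτ : IsMatching n τ) {i : ZMod (2*n)} (hA : inA n τ i) :
    crossNum n (sMove n i τ) = crossNum n τ + 1 := by
  rw [crossNum, crossNum, sMove_ncard hn hτ hA]
  exact Nat.add_div_right _ (by norm_num)

end Count







section Move
variable {n : ℕ}

lemma sMove_uncrossing (hn : 1 ≤ n) {τ : ZMod (2*n) → ZMod (2*n)}
    (hτ : IsMatching n τ) {i : ZMod (2*n)} (hA : inA n τ i) :
    UncrossingMove n (sMove n i τ) τ := by
  haveI : NeZero (2*n) := ⟨by omega⟩
  have hm : 1 < 2*n := by omega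
  obtain ⟨hii1, ht0i, ht0i1, ht1i1, ht1i, ht01⟩ := inA_facts hn hτ hA
  set s : Equiv.Perm (ZMod (2*n)) := Equiv.swap i (i+1) with hs
  set σ : ZMod (2*n) → ZMod (2*n) := sMove n i τ with hσdef
  have hsi : s i = i + 1 := Equiv.swap_apply_left _ _
  have hsi1 : s (i+1) = i := Equiv.swap_apply_right _ _
  have hsf : ∀ x : ZMod (2*n), x ≠ i → x ≠ i + 1 → s x = x := fun x h1 h2 =>
    Equiv.swap_apply_of_ne_of_ne h1 h2
  have hτt0 : τ (τ i) = i := hτ.1 i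
  have hτt1 : τ (τ (i+1)) = i + 1 := hτ.1 _
  have hσi : σ i = τ (i+1) := by
    show s (τ (s _)) = _
    rw [ hsi, hsf _ ht1i ht1i1]
  have hσi1 : σ (i+1) = τ i := by
    show s (τ (s _)) = _
    rw [ hsi1, hsf _ ht0i ht0i1]
  have hσt0 : σ (τ i) = i + 1 := by
    show s (τ (s _)) = _
    rw [ hsf _ ht0i ht0i1, hτt0, hsi]
  have hσt1 : σ (τ (i+1)) = i := by
    show s (τ (s _)) = _
    rw [ hsf _ ht1i ht1i1, hτt1, hsi1]
  have hB : Crosses (2*n) (i+1) (τ i) i (τ (i+1)) := by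
    have hf := crosses_flip (m := 2*n) hm ht0i ht0i1 ht1i ht1i1 ht01
    have := hA.2
    tauto
  refine ⟨i, i + 1, ?_, Or.inr ?_⟩
  · rw [hσi, hσi1]
    exact crosses_swap_chords hB
  · funext x
    rw [hσi1, swapPair]
    simp only [hσi, hσt0]
    by_cases h1 : x = i
    · rw [if_pos h1, h1]
    · rw [if_neg h1]
      by_cases h2 : x = τ i
      · rw [if_pos h2, h2, hτt0]
      · rw [if_neg h2]
        by_cases h3 : x = τ (i+1)
        · rw [if_pos h3, h3, hτt1]
        · rw [if_neg h3]
          by_cases h4 : x = i + 1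
          · rw [if_pos h4, h4]
          · rw [if_neg h4]
            show _ = s (τ (s x))
            have hx2 : τ x ≠ i := fun h => by
              have hh := hτ.1 x; rw [h] at hh; exact h2 hh.symm
            have hx3 : τ x ≠ i + 1 := fun h => by
              have hh := hτ.1 x; rw [h] at hh; exact h3 hh.symm
            rw [hsf x h1 h4, hsf (τ x) hx2 hx3]
end Move

section Anonempty
variable {n : ℕ}

lemma adjacent_not_crosses {m : ℕ} [NeZero m] (hm : 1 < m) (a b c : ZMod m) :
    ¬ Crosses m a b c (c + 1) := by
  intro h
  obtain ⟨hab, hcd, hca, hcb, hda, hdb⟩ := crosses_distinct h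
  rw [cross_iff hab hcd hca hcb hda hdb] at h
  have hs : dv a (c + 1) = dv a c + 1 := dv_succ hm hda
  have h1 : dv a c ≠ dv a b := dv_ne hcb
  have h2 : dv a (c + 1) ≠ dv a b := dv_ne hdb
  omega

lemma exists_inA (hn : 1 ≤ n) {τ : ZMod (2*n) → ZMod (2*n)} (hτ : IsMatching n τ)
    (hne : τ ≠ fun j => j + (n : ZMod (2*n))) : ∃ i, inA n τ i := by
  haveI : NeZero (2*n) := ⟨by omega⟩
  have hm : 1 < 2*n := by omega
  by_contra hA
  push_neg at hA
  apply hne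
  rcases eq_or_lt_of_le hn with h1 | h2
  · -- n = 1
    have hn1 : n = 1 := h1.symm
    subst hn1
    funext j
    have hj := hτ.2 j
    have key : ∀ x y : ZMod (2*1), x ≠ y → x = y + 1 := by decide
    have hk := key _ _ hj
    rw [hk, Nat.cast_one]
  · -- 2 ≤ n
    have hC : ∀ i, τ i ≠ i + 1 := by
      intro i hCi
      have hnAj := hA (i - 1)
      have hji : i - 1 + 1 = i := by ring
      by_cases hτj : τ (i - 1) = i - 1 + 1
      · rw [hji] at hτj
        have hti := congrArg τ hτj
        rw [hτ.1] at hti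
        rw [hCi] at hti
        replace hti := hti.symm
        have h20 : ((2:ℕ) : ZMod (2*n)) = 0 := by push_cast; linear_combination hti
        have := Nat.le_of_dvd (by norm_num)
          ((ZMod.natCast_eq_zero_iff 2 (2*n)).1 h20)
        omega
      · have hcr : Crosses (2*n) (i-1) (τ (i-1)) (i-1+1) (τ (i-1+1)) := by
          rw [inA] at hnAj
          tauto
        rw [hji, hCi] at hcr
        exact adjacent_not_crosses hm _ _ _ hcr
    have hcross : ∀ i, Crosses (2*n) i (τ i) (i+1) (τ (i+1)) := fun i => by
      have := hA i; rw [inA] at this; tauto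
    have hdlow : ∀ i, 2 ≤ dv i (τ i) := by
      intro i
      have hp : 0 < dv i (τ i) := dv_pos (hτ.2 i)
      have hne1 : dv i (τ i) ≠ 1 := by
        intro h1
        apply hC i
        have h0 : dv i i = 0 := by rw [dv_eq_zero]
        have hs1 : dv i (i+1) = 1 := by rw [dv_succ hm (succ_ne_self' hm i), h0]
        exact dv_inj (h1.trans hs1.symm)
      omega
    have hdhigh : ∀ i, dv i (τ i) ≤ 2*n - 2 := by
      intro i
      have hlt : dv i (τ i) < 2*n := dv_lt _ _
      have hne1 : dv i (τ i) ≠ 2*n - 1 := by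
        intro h1
        apply hC (i - 1)
        have hji : i - 1 + 1 = i := by ring
        rw [hji]
        have hv : ((dv i (τ i) : ℕ) : ZMod (2*n)) = τ i - i := ZMod.natCast_zmod_val _
        rw [h1] at hv
        have hm1 : ((2*n - 1 : ℕ) : ZMod (2*n)) = -1 := by
          have hz : ((2*n : ℕ) : ZMod (2*n)) = 0 := ZMod.natCast_self _
          rw [Nat.cast_sub (by omega : 1 ≤ 2*n), hz, Nat.cast_one]
          ring
        rw [hm1] at hv
        have hti : τ i = i - 1 := by linear_combination hv.symm
        rw [← hti, hτ.1]
      omega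
    have hmono : ∀ i, dv i (τ i) ≤ dv (i+1) (τ (i+1)) := by
      intro i
      have hcr := hcross i
      obtain ⟨hab, hcd, hca, hcb, hda, hdb⟩ := crosses_distinct hcr
      rw [cross_iff hab hcd hca hcb hda hdb] at hcr
      have hii1 : i + 1 ≠ i := succ_ne_self' hm i
      have h0 : dv i i = 0 := by rw [dv_eq_zero]
      have hs1 : dv i (i+1) = 1 := by rw [dv_succ hm hii1, h0]
      have hre := dv_rebase (a := i) hii1 (τ (i+1))
      have hp := dv_pos hda
      rw [hs1] at hre hcr
      have hne2 : dv i (τ (i+1)) ≠ dv i (τ i) := dv_ne hdb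
      have h2 := hdlow i
      omega
    have hconst : ∀ (i : ZMod (2*n)) (k : ℕ),
        dv i (τ i) ≤ dv (i + (k : ZMod (2*n))) (τ (i + (k : ZMod (2*n)))) := by
      intro i k
      induction k with
      | zero => simp
      | succ k ih =>
        have e : i + ((k+1 : ℕ) : ZMod (2*n)) = (i + (k : ZMod (2*n))) + 1 := by
          push_cast; ring
        rw [e]
        exact ih.trans (hmono _)
    have hall : ∀ i j : ZMod (2*n), dv i (τ i) ≤ dv j (τ j) := by
      intro i j
      have hh : ((dv i j : ℕ) : ZMod (2*n)) = j - i := ZMod.natCast_zmod_val _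
      have := hconst i (dv i j)
      rwa [show i + ((dv i j : ℕ) : ZMod (2*n)) = j from by rw [hh]; ring] at this
    have hdeq : ∀ i j : ZMod (2*n), dv i (τ i) = dv j (τ j) := fun i j =>
      le_antisymm (hall i j) (hall j i)
    funext i
    have hcast : ∀ j : ZMod (2*n), τ j = j + ((dv j (τ j) : ℕ) : ZMod (2*n)) := by
      intro j
      have hh : ((dv j (τ j) : ℕ) : ZMod (2*n)) = τ j - j := ZMod.natCast_zmod_val _
      rw [hh]; ring
    have hsum : ((dv i (τ i) + dv i (τ i) : ℕ) : ZMod (2*n)) = 0 := by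
      have h1 := hcast i
      have h2 := hcast (τ i)
      rw [hdeq (τ i) i] at h2
      rw [hτ.1] at h2
      push_cast
      linear_combination (-1 : ZMod (2*n)) * h1 + (-1 : ZMod (2*n)) * h2
    have hdvd := (ZMod.natCast_eq_zero_iff _ _).1 hsum
    have h2le := hdlow i
    have h2hi := hdhigh i
    have hdn : dv i (τ i) = n := by
      obtain ⟨c, hc⟩ := hdvd
      have hc0 : c ≠ 0 := by
        rintro rfl
        rw [mul_zero] at hc
        omega
      have hc2 : c < 2 := by
        by_contra hcc
        push_neg at hcc
        have hx : 2*n*2 ≤ 2*n*c := Nat.mul_le_mul_left _ hcc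
        omega
      have hc1 : c = 1 := by omega
      rw [hc1, mul_one] at hc
      omega
    show τ i = i + (n : ZMod (2*n))
    rw [hcast i, hdn]
end Anonempty

section Top
variable {n : ℕ}

lemma top_matching (hn : 1 ≤ n) :
    IsMatching n (fun i => i + (n : ZMod (2*n))) := by
  haveI : NeZero (2*n) := ⟨by omega⟩
  have hz : ((2*n : ℕ) : ZMod (2*n)) = 0 := ZMod.natCast_self _
  have hnn : ((n : ℕ) : ZMod (2*n)) + ((n : ℕ) : ZMod (2*n)) = 0 := by
    rw [← Nat.cast_add, show n + n = 2*n from by ring, hz]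
  constructor
  · intro i
    show i + ↑n + ↑n = i
    rw [add_assoc, hnn, add_zero]
  · intro i h
    have h0 : ((n : ℕ) : ZMod (2*n)) = 0 := by
      have : i + ↑n = i := h
      linear_combination this
    have := Nat.le_of_dvd (by omega) ((ZMod.natCast_eq_zero_iff n (2*n)).1 h0)
    omega

lemma top_crossNum (hn : 1 ≤ n) :
    crossNum n (fun i => i + (n : ZMod (2*n))) = n * (n - 1) / 2 := by
  haveI : NeZero (2*n) := ⟨by omega⟩
  have hz : ((2*n : ℕ) : ZMod (2*n)) = 0 := ZMod.natCast_self _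
  have hnn : ((n : ℕ) : ZMod (2*n)) + ((n : ℕ) : ZMod (2*n)) = 0 := by
    rw [← Nat.cast_add, show n + n = 2*n from by ring, hz]
  have hn0 : ((n : ℕ) : ZMod (2*n)) ≠ 0 := by
    intro h0
    have := Nat.le_of_dvd (by omega) ((ZMod.natCast_eq_zero_iff n (2*n)).1 h0)
    omega
  rw [crossNum]
  have hS : {p : ZMod (2*n) × ZMod (2*n) |
      Crosses (2*n) p.1 (p.1 + (n : ZMod (2*n))) p.2 (p.2 + (n : ZMod (2*n)))} =
      ((fun x : ZMod (2*n) => (x, x)) '' Set.univ ∪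
       (fun x : ZMod (2*n) => (x, x + (n : ZMod (2*n)))) '' Set.univ)ᶜ := by
    ext ⟨p, q⟩
    simp only [Set.mem_setOf_eq, Set.mem_compl_iff, Set.mem_union, Set.mem_image,
      Set.mem_univ, true_and, Prod.mk.injEq, not_or, not_exists, not_and]
    constructor
    · intro h
      constructor
      · intro x hx hq
        rw [hx] at hq
        exact h.2.2.1 hq.symm
      · intro x hx hq
        rw [hx] at hq
        exact h.2.2.2.1 hq.symm
    · rintro ⟨h1, h2⟩
      have hqp : q ≠ p := fun h => h1 p rfl h.symm
      have hqpn : q ≠ p + ↑n := fun h => h2 p rfl h.symm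
      have hppn : p ≠ p + (n : ZMod (2*n)) := fun h => hn0 (by linear_combination -h)
      have hqqn : q ≠ q + (n : ZMod (2*n)) := fun h => hn0 (by linear_combination -h)
      refine ⟨hppn, hqqn, hqp, hqpn, ?_, ?_, ?_⟩
      · intro h
        exact hqpn (by linear_combination h - hnn)
      · intro h
        exact hqp (by linear_combination h)
      · have e1 : (p + (n : ZMod (2*n))) - p = ((n : ℕ) : ZMod (2*n)) := by ring
        have e2 : (q + (n : ZMod (2*n))) - (p + (n : ZMod (2*n))) = q - p := by ring
        have e3 : p - (p + (n : ZMod (2*n))) = ((n : ℕ) : ZMod (2*n)) := by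
          linear_combination -hnn
        simp only [InArc]
        rw [e1, e2, e3]
  rw [hS]
  have hinj1 : Function.Injective (fun x : ZMod (2*n) => (x, x)) := fun a b h =>
    congrArg Prod.fst h
  have hinj2 : Function.Injective (fun x : ZMod (2*n) => (x, x + (n : ZMod (2*n)))) :=
    fun a b h => congrArg Prod.fst h
  have hdis : Disjoint ((fun x : ZMod (2*n) => (x, x)) '' Set.univ)
      ((fun x : ZMod (2*n) => (x, x + (n : ZMod (2*n)))) '' Set.univ) := by
    rw [Set.disjoint_left]
    rintro ⟨p, q⟩ h1 h2
    simp only [Set.mem_image, Set.mem_univ, true_and, Prod.mk.injEq] at h1 h2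
    obtain ⟨x, rfl, rfl⟩ := h1
    obtain ⟨y, rfl, hy⟩ := h2
    exact hn0 (by linear_combination hy)
  have hcZ : Nat.card (ZMod (2*n)) = 2*n := Nat.card_zmod _
  have hcU : ((fun x : ZMod (2*n) => (x, x)) '' Set.univ ∪
      (fun x : ZMod (2*n) => (x, x + (n : ZMod (2*n)))) '' Set.univ).ncard = 4*n := by
    rw [Set.ncard_union_eq hdis (Set.toFinite _) (Set.toFinite _),
      Set.ncard_image_of_injective _ hinj1, Set.ncard_image_of_injective _ hinj2,
      Set.ncard_univ, hcZ]
    omega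
  have hcard := Set.ncard_add_ncard_compl ((fun x : ZMod (2*n) => (x, x)) '' Set.univ ∪
      (fun x : ZMod (2*n) => (x, x + (n : ZMod (2*n)))) '' Set.univ)
  rw [hcU] at hcard
  have hcP : Nat.card (ZMod (2*n) × ZMod (2*n)) = 2*n*(2*n) := by
    rw [Nat.card_prod, hcZ]
  rw [hcP] at hcard
  -- hcard : 4*n + (compl).ncard = 2*n*(2*n)
  obtain ⟨k, rfl⟩ : ∃ k, n = k + 1 := ⟨n - 1, by omega⟩
  have hsq : 2*(k+1)*(2*(k+1)) = 4*((k+1)*k) + 4*(k+1) := by ring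
  have hmm : (k+1) * ((k+1) - 1) = (k+1)*k := by simp
  rw [hmm]
  obtain ⟨t, ht⟩ : Even ((k+1)*k) := by
    rw [mul_comm]
    exact Nat.even_mul_succ_self k
  omega

lemma crossNum_le_card (hn : 1 ≤ n) (τ : ZMod (2*n) → ZMod (2*n)) :
    crossNum n τ ≤ Nat.card (ZMod (2*n) × ZMod (2*n)) := by
  haveI : NeZero (2*n) := ⟨by omega⟩
  rw [crossNum]
  refine (Nat.div_le_self _ _).trans ?_
  refine (Set.ncard_le_ncard (Set.subset_univ _) (Set.toFinite _)).trans ?_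
  rw [Set.ncard_univ]

lemma reach_top (hn : 1 ≤ n) : ∀ (k : ℕ) (τ : ZMod (2*n) → ZMod (2*n)),
    IsMatching n τ → Nat.card (ZMod (2*n) × ZMod (2*n)) + 1 - crossNum n τ ≤ k →
    UncrossLE n τ (fun j => j + (n : ZMod (2*n))) := by
  intro k
  induction k with
  | zero =>
    intro τ hτ hb
    exfalso
    have := crossNum_le_card hn τ
    omega
  | succ k ih =>
    intro τ hτ hb
    by_cases he : τ = fun j => j + (n : ZMod (2*n))
    · rw [he]
      exact Relation.ReflTransGen.refl
    · obtain ⟨i, hA⟩ := exists_inA hn hτ he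
      have hσm := sMove_matching hτ i
      have hσc := sMove_crossNum hn hτ hA
      have hσu := sMove_uncrossing hn hτ hA
      have hle := crossNum_le_card hn (sMove n i τ)
      exact Relation.ReflTransGen.head ⟨hτ, hσm, hσu, hσc⟩
        (ih _ hσm (by omega))
end Top

/-- The uncrossing order on `P_n` has a unique maximal element, namely
`τ_top : i ↦ i + n`, which lies above every matching, and `c(τ_top) = n(n-1)/2`. -/
theorem top_element (n : ℕ) (hn : 1 ≤ n) :
    IsMatching n (fun i => i + (n : ZMod (2 * n))) ∧
    (∀ τ, IsMatching n τ → UncrossLE n τ (fun i => i + (n : ZMod (2 * n)))) ∧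
    (∀ τ, IsMatching n τ → (∀ σ, IsMatching n σ → UncrossLE n τ σ → τ = σ) →
      τ = fun i => i + (n : ZMod (2 * n))) ∧
    crossNum n (fun i => i + (n : ZMod (2 * n))) = n * (n - 1) / 2 := by
  refine ⟨top_matching hn, fun τ hτ => reach_top hn _ τ hτ le_rfl,
    fun τ hτ hmax => hmax _ (top_matching hn) (reach_top hn _ τ hτ le_rfl),
    top_crossNum hn⟩
end
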